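/- The instance (A, k) of Distinct Vectors constructed from φ has a solution if and only if φ is satisfiable. -/

import Mathlib

/-!
The construction of the paper.  Rows and columns are 0-indexed here:
* `r ≥ 2` is a power of two, the number of variables of the CNF formula `φ`;
  variables are elements of `Fin r`; a literal is a variable plus a polarity.
* `s = 2 ^ ℓ - 1` (with `ℓ ≥ 1`) is the number of clauses; clause `q : Fin s`
  is the finite set `Clause q` of literals.
* `L = log₂ r` is the number of bundles; bundle `i` is a list `B i` of exactly
  `r' = ⌈r / log₂ r⌉` variables (with repetitions allowed), and every variable
  occurs in exactly one bundle.
* For every bundle `i` there is a list of `ρ = 2 ^ r'` truth assignments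
  `asg i p : Fin r → Bool` (`p : Fin ρ`, only the values on `B i`'s variables are
  relevant) containing every assignment of `B i`'s variables at least once.
* The matrix `A` has `n = ℓ + ρ * L` columns: the `ℓ` consistency columns
  `0, …, ℓ - 1`, followed, for each bundle `i`, by `B i`'s columns
  `ℓ + i * ρ, …, ℓ + (i + 1) * ρ - 1` (the `p`-th corresponding to assignment `p`).
* The matrix `A` has `m = 1 + L + 2 * s` rows: the all-zero row `0`, the bundle
  indicator rows `1, …, L` (row `i + 1` is `1` exactly on bundle `i`'s columns),
  and, for each clause `q : Fin s`, the odd row `1 + L + 2 * q` (the `ℓ`-bit binary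
  encoding of `q + 1` on the consistency columns and `sat_i(p, q)` on the `p`-th of
  bundle `i`'s columns) and the even row `1 + L + 2 * q + 1` (the encoding of `q + 1`
  on the consistency columns and `0` elsewhere).
* `k = ℓ + L`.  A solution is a set `K` of at most `k` columns such that the rows
  of `A` restricted to the columns in `K` are pairwise distinct.
-/

/-- A literal over variables `Fin r`: a variable together with a polarity. -/
structure DVLit (r : ℕ) where
  var : Fin r
  pos : Bool
deriving DecidableEq

/-- All the data of the construction: the CNF formula `φ` (variables, clauses),
the bundles, and the lists of truth assignments of each bundle. -/
structure DVInstance where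
  /-- number of variables -/
  r : ℕ
  hr : 2 ≤ r
  hrpow : ∃ t : ℕ, r = 2 ^ t
  ℓ : ℕ
  hℓ : 1 ≤ ℓ
  /-- number of clauses -/
  s : ℕ
  hs : s = 2 ^ ℓ - 1
  /-- the clauses of `φ` -/
  Clause : Fin s → Finset (DVLit r)
  /-- the bundles: lists of variables of length `r' = ⌈r / log₂ r⌉` -/
  B : Fin (Nat.log 2 r) → List (Fin r)
  hBlen : ∀ i, (B i).length = (r + Nat.log 2 r - 1) / Nat.log 2 r
  /-- every variable occurs in exactly one bundle -/
  hBpart : ∀ v : Fin r, ∃! i, v ∈ B i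
  /-- the list of `ρ = 2 ^ r'` truth assignments of each bundle -/
  asg : Fin (Nat.log 2 r) → Fin (2 ^ ((r + Nat.log 2 r - 1) / Nat.log 2 r)) →
    Fin r → Bool
  /-- every assignment of a bundle's variables occurs at least once in its list -/
  hasg : ∀ i, ∀ β : Fin r → Bool, ∃ p, ∀ v ∈ B i, asg i p v = β v

namespace DVInstance

variable (D : DVInstance)

/-- `L = log₂ r`, the number of bundles. -/
def L : ℕ := Nat.log 2 D.r

/-- `r' = ⌈r / log₂ r⌉`, the size of each bundle. -/
def r' : ℕ := (D.r + D.L - 1) / D.L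

/-- `ρ = 2 ^ r'`, the number of columns of each bundle. -/
def ρ : ℕ := 2 ^ D.r'

/-- the number `n = log₂(s + 1) + ρ * log₂ r` of columns of `A`. -/
def n : ℕ := D.ℓ + D.ρ * D.L

/-- the number `m = 1 + log₂ r + 2 * s` of rows of `A`. -/
def m : ℕ := 1 + D.L + 2 * D.s

/-- the budget `k = log₂(s + 1) + log₂ r`. -/
def k : ℕ := D.ℓ + D.L

/-- `sat_i(p, q)`: whether the `p`-th assignment of bundle `i` makes clause `q` true,
i.e. whether some literal of clause `q` whose variable belongs to bundle `i` is set
to its polarity by the `p`-th assignment of bundle `i` (nat-indexed version;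
`false` outside the index ranges). -/
def satN (i p q : ℕ) : Bool :=
  if h : i < D.L ∧ p < D.ρ ∧ q < D.s then
    decide (∃ lit ∈ D.Clause ⟨q, h.2.2⟩, lit.var ∈ D.B ⟨i, h.1⟩ ∧
      D.asg ⟨i, h.1⟩ ⟨p, h.2.1⟩ lit.var = lit.pos)
  else false

/-- The constructed binary matrix `A` (rows and columns 0-indexed;
entries outside the `m × n` range are irrelevant). -/
def A (row col : ℕ) : Bool :=
  if row = 0 then
    -- the all-zero row
    false
  else if row ≤ D.L then
    -- bundle indicator rows: row `i + 1` is `1` exactly on bundle `i`'s columns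
    decide (D.ℓ + (row - 1) * D.ρ ≤ col ∧ col < D.ℓ + row * D.ρ)
  else if col < D.ℓ then
    -- clause rows on the consistency columns: the binary encoding of the
    -- (1-indexed) clause number
    Nat.testBit ((row - D.L - 1) / 2 + 1) col
  else if (row - D.L - 1) % 2 = 0 then
    -- odd row of clause `q = (row - L - 1) / 2`: `sat_i(p, q)` on the `p`-th of
    -- bundle `i`'s columns
    D.satN ((col - D.ℓ) / D.ρ) ((col - D.ℓ) % D.ρ) ((row - D.L - 1) / 2)
  else
    -- even row of clause `q`: zero outside the consistency columns
    false

/-- `K` is a solution for the instance `(A, k)`: a set of at most `k` columns of `A`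
such that the rows of `A` restricted to the columns in `K` are pairwise distinct. -/
def Solution (K : Finset ℕ) : Prop :=
  (∀ c ∈ K, c < D.n) ∧ K.card ≤ D.k ∧
    ∀ i j, i < D.m → j < D.m → i ≠ j → ∃ c ∈ K, D.A i c ≠ D.A j c

end DVInstance

/-!
A solution must contain every consistency column (column `j` is the only one separating the zero
row from the even row of the clause encoded by `2 ^ j`) and a column of every bundle (only those
separate the zero row from the bundle's indicator row). As `k = ℓ + L`, it consists of exactly
these, so it amounts to choosing one assignment per bundle. The two rows of a clause agree on the
consistency columns and on all columns but those where `sat_i(p, q) = 1`, so they are separated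
iff some chosen bundle assignment satisfies the clause; every other pair of rows is separated by
the consistency columns or by the chosen bundle columns.
-/

theorem Nat.exists_testBit_ne_of_lt_two_pow {a b ℓ : ℕ} (ha : a < 2 ^ ℓ) (hb : b < 2 ^ ℓ)
    (hab : a ≠ b) : ∃ j < ℓ, a.testBit j ≠ b.testBit j := by
  by_contra! h
  refine hab (Nat.eq_of_testBit_eq fun j => ?_)
  by_cases hj : j < ℓ
  · exact h j hj
  · have : 2 ^ ℓ ≤ 2 ^ j := Nat.pow_le_pow_right two_pos (not_lt.1 hj)
    rw [Nat.testBit_lt_two_pow (ha.trans_le this), Nat.testBit_lt_two_pow (hb.trans_le this)]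

namespace DVInstance

variable (D : DVInstance)

lemma s_add_one : D.s + 1 = 2 ^ D.ℓ := by
  have := D.hs
  have := Nat.one_le_two_pow (n := D.ℓ)
  omega

def bundleCol (i : Fin D.L) (p : Fin D.ρ) : ℕ := D.ℓ + (i * D.ρ + p)

def oddRow (q : Fin D.s) : ℕ := 1 + D.L + 2 * q

def evenRow (q : Fin D.s) : ℕ := D.oddRow q + 1

/-- The number whose binary encoding row `x` carries on the consistency columns. -/
def consistencyCode (x : ℕ) : ℕ := if x ≤ D.L then 0 else (x - D.L - 1) / 2 + 1

lemma le_bundleCol (i : Fin D.L) (p : Fin D.ρ) : D.ℓ ≤ D.bundleCol i p :=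
  Nat.le_add_right _ _

lemma bundleCol_lt_n (i : Fin D.L) (p : Fin D.ρ) : D.bundleCol i p < D.n := by
  have := Nat.mul_le_mul_right D.ρ (Nat.succ_le_of_lt i.isLt)
  rw [Nat.succ_mul] at this
  unfold bundleCol n
  rw [Nat.mul_comm D.ρ]
  omega

lemma bundleCol_inj {i j : Fin D.L} {p p' : Fin D.ρ} :
    D.bundleCol i p = D.bundleCol j p' ↔ i = j ∧ p = p' := by
  refine ⟨fun h => ?_, fun ⟨hij, hp⟩ => hij ▸ hp ▸ rfl⟩
  have h' : (p : ℕ) + i * D.ρ = p' + j * D.ρ := by unfold bundleCol at h; omega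
  have hij : (i : ℕ) = j := by
    simpa [Nat.add_mul_div_right _ _ p.pos, Nat.div_eq_of_lt p.isLt,
      Nat.div_eq_of_lt p'.isLt] using congrArg (· / D.ρ) h'
  exact ⟨Fin.ext hij, Fin.ext (by rw [hij] at h'; omega)⟩

lemma evenRow_lt_m (q : Fin D.s) : D.evenRow q < D.m := by
  unfold evenRow oddRow m
  omega

lemma consistencyCode_oddRow (q : Fin D.s) : D.consistencyCode (D.oddRow q) = q + 1 := by
  unfold consistencyCode oddRow
  rw [if_neg (by omega)]
  omega

lemma consistencyCode_evenRow (q : Fin D.s) : D.consistencyCode (D.evenRow q) = q + 1 := by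
  unfold consistencyCode evenRow oddRow
  rw [if_neg (by omega)]
  omega

lemma consistencyCode_lt {x : ℕ} (hx : x < D.m) : D.consistencyCode x < 2 ^ D.ℓ := by
  have := D.s_add_one
  unfold consistencyCode m at *
  split_ifs <;> omega

lemma A_of_lt_ℓ (x : ℕ) {c : ℕ} (hc : c < D.ℓ) :
    D.A x c = (D.consistencyCode x).testBit c := by
  unfold A consistencyCode
  by_cases h0 : x = 0
  · simp [h0]
  by_cases hL : x ≤ D.L
  · rw [if_neg h0, if_pos hL, if_pos hL, Nat.zero_testBit, decide_eq_false_iff_not]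
    exact fun h => hc.not_ge ((Nat.le_add_right _ _).trans h.1)
  · rw [if_neg h0, if_neg hL, if_neg hL, if_pos hc]

lemma A_zero_left (c : ℕ) : D.A 0 c = false := rfl

lemma A_succ_eq_true (i : Fin D.L) {c : ℕ} :
    D.A (i + 1) c = true ↔ ∃ p, c = D.bundleCol i p := by
  unfold A bundleCol
  rw [if_neg (by omega), if_pos (Nat.succ_le_of_lt i.isLt), decide_eq_true_iff, Nat.add_sub_cancel,
    Nat.succ_mul]
  constructor
  · rintro ⟨h₁, h₂⟩
    exact ⟨⟨c - D.ℓ - i * D.ρ, by omega⟩, by simp only; omega⟩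
  · rintro ⟨p, rfl⟩
    have := p.isLt
    omega

lemma A_evenRow_of_le (q : Fin D.s) {c : ℕ} (hc : D.ℓ ≤ c) : D.A (D.evenRow q) c = false := by
  unfold A evenRow oddRow
  rw [if_neg (by omega), if_neg (by omega), if_neg (by omega), if_neg (by omega)]

lemma A_oddRow_bundleCol (q : Fin D.s) (i : Fin D.L) (p : Fin D.ρ) :
    D.A (D.oddRow q) (D.bundleCol i p) = true ↔
      ∃ lit ∈ D.Clause q, lit.var ∈ D.B i ∧ D.asg i p lit.var = lit.pos := by
  have hq : (D.oddRow q - D.L - 1) / 2 = q := by unfold oddRow; omega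
  have hcol : D.bundleCol i p - D.ℓ = p + i * D.ρ := by unfold bundleCol; omega
  unfold A
  rw [if_neg (by unfold oddRow; omega), if_neg (by unfold oddRow; omega),
    if_neg (D.le_bundleCol i p).not_gt, if_pos (by unfold oddRow; omega), hq, hcol,
    Nat.add_mul_div_right _ _ p.pos, Nat.add_mul_mod_self_right, Nat.div_eq_of_lt p.isLt,
    Nat.mod_eq_of_lt p.isLt, Nat.zero_add]
  simp only [satN, i.isLt, p.isLt, q.isLt, and_self, dif_pos, decide_eq_true_iff]
  rfl

def selectedColumns (p : Fin D.L → Fin D.ρ) : Finset ℕ :=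
  Finset.range D.ℓ ∪ Finset.univ.image fun i => D.bundleCol i (p i)

def SatisfiesClause (p : Fin D.L → Fin D.ρ) (q : Fin D.s) : Prop :=
  ∃ i, ∃ lit ∈ D.Clause q, lit.var ∈ D.B i ∧ D.asg i (p i) lit.var = lit.pos

lemma card_selectedColumns (p : Fin D.L → Fin D.ρ) : (D.selectedColumns p).card = D.k := by
  have hdisj : Disjoint (Finset.range D.ℓ) (Finset.univ.image fun i => D.bundleCol i (p i)) := by
    simp only [Finset.disjoint_left, Finset.mem_range, Finset.mem_image]
    rintro c hc ⟨i, -, rfl⟩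
    exact (D.le_bundleCol i (p i)).not_gt hc
  have hinj : Function.Injective fun i => D.bundleCol i (p i) :=
    fun i j h => (D.bundleCol_inj.1 h).1
  rw [selectedColumns, Finset.card_union_of_disjoint hdisj, Finset.card_range,
    Finset.card_image_of_injective _ hinj, Finset.card_univ, Fintype.card_fin, k]

lemma range_subset_of_solution {K : Finset ℕ} (hK : D.Solution K) : Finset.range D.ℓ ⊆ K := by
  intro j hj
  have hj := Finset.mem_range.1 hj
  have hq : 2 ^ j - 1 < D.s := by
    rw [D.hs]
    exact Nat.sub_lt_sub_right Nat.one_le_two_pow (Nat.pow_lt_pow_right (by norm_num) hj)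
  have hcode : D.consistencyCode (D.evenRow ⟨2 ^ j - 1, hq⟩) = 2 ^ j := by
    rw [consistencyCode_evenRow]
    exact Nat.sub_add_cancel Nat.one_le_two_pow
  obtain ⟨c, hc, hne⟩ := hK.2.2 0 _ (by unfold m; omega) (D.evenRow_lt_m ⟨_, hq⟩)
    (by unfold evenRow; omega)
  by_cases hcℓ : c < D.ℓ
  · rw [A_zero_left, A_of_lt_ℓ _ _ hcℓ, hcode, Nat.testBit_two_pow] at hne
    simp only [ne_eq, Bool.false_eq, decide_eq_false_iff_not, not_not] at hne
    exact hne ▸ hc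
  · exact absurd (D.A_evenRow_of_le _ (not_lt.1 hcℓ)).symm hne

lemma exists_bundleCol_mem_of_solution {K : Finset ℕ} (hK : D.Solution K) (i : Fin D.L) :
    ∃ p, D.bundleCol i p ∈ K := by
  obtain ⟨c, hc, hne⟩ := hK.2.2 0 (i + 1) (by unfold m; omega) (by unfold m; omega) (by omega)
  rw [A_zero_left, ne_eq, Bool.false_eq, Bool.not_eq_false, A_succ_eq_true] at hne
  obtain ⟨p, rfl⟩ := hne
  exact ⟨p, hc⟩

lemma exists_eq_selectedColumns_of_solution {K : Finset ℕ} (hK : D.Solution K) :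
    ∃ p, K = D.selectedColumns p := by
  choose p hp using D.exists_bundleCol_mem_of_solution hK
  refine ⟨p, (Finset.eq_of_subset_of_card_le ?_ ?_).symm⟩
  · exact Finset.union_subset (D.range_subset_of_solution hK)
      (Finset.image_subset_iff.2 fun i _ => hp i)
  · exact (D.card_selectedColumns p).symm ▸ hK.2.1

lemma exists_eq_oddRow_evenRow {x y : ℕ} (hcode : D.consistencyCode x = D.consistencyCode y)
    (hxy : x < y) (hy : y < D.m) (hyL : D.L < y) : ∃ q, x = D.oddRow q ∧ y = D.evenRow q := by
  unfold consistencyCode at hcode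
  rw [if_neg hyL.not_ge] at hcode
  split_ifs at hcode
  unfold m at hy
  exact ⟨⟨(x - D.L - 1) / 2, by omega⟩, by unfold oddRow; dsimp only; omega,
    by unfold evenRow oddRow; dsimp only; omega⟩

lemma separates_selectedColumns {p : Fin D.L → Fin D.ρ} (hsat : ∀ q, D.SatisfiesClause p q)
    {x y : ℕ} (hxy : x < y) (hy : y < D.m) :
    ∃ c ∈ D.selectedColumns p, D.A x c ≠ D.A y c := by
  have mem_bundleCol (i : Fin D.L) : D.bundleCol i (p i) ∈ D.selectedColumns p :=
    Finset.mem_union_right _ (Finset.mem_image_of_mem _ (Finset.mem_univ i))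
  by_cases hcode : D.consistencyCode x = D.consistencyCode y
  · by_cases hyL : y ≤ D.L
    · obtain ⟨i, rfl⟩ : ∃ i : Fin D.L, y = i + 1 := ⟨⟨y - 1, by omega⟩, by simp only; omega⟩
      refine ⟨D.bundleCol i (p i), mem_bundleCol i, ?_⟩
      rw [(D.A_succ_eq_true i).2 ⟨_, rfl⟩]
      obtain rfl | ⟨j, rfl⟩ : x = 0 ∨ ∃ j : Fin D.L, x = j + 1 :=
        x.eq_zero_or_pos.imp id fun hx => ⟨⟨x - 1, by omega⟩, by simp only; omega⟩
      · simp [A_zero_left]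
      · rw [ne_eq, A_succ_eq_true]
        rintro ⟨p', hp'⟩
        have := (D.bundleCol_inj.1 hp').1
        omega
    · obtain ⟨q, rfl, rfl⟩ := D.exists_eq_oddRow_evenRow hcode hxy hy (not_le.1 hyL)
      obtain ⟨i, hi⟩ := hsat q
      refine ⟨D.bundleCol i (p i), mem_bundleCol i, ?_⟩
      rw [(D.A_oddRow_bundleCol q i (p i)).2 hi, D.A_evenRow_of_le q (D.le_bundleCol i (p i))]
      decide
  · obtain ⟨j, hj, hne⟩ := Nat.exists_testBit_ne_of_lt_two_pow
      (D.consistencyCode_lt (hxy.trans hy)) (D.consistencyCode_lt hy) hcode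
    refine ⟨j, Finset.mem_union_left _ (Finset.mem_range.2 hj), ?_⟩
    rwa [A_of_lt_ℓ _ _ hj, A_of_lt_ℓ _ _ hj]

lemma solution_selectedColumns_iff (p : Fin D.L → Fin D.ρ) :
    D.Solution (D.selectedColumns p) ↔ ∀ q, D.SatisfiesClause p q := by
  constructor
  · rintro ⟨-, -, hsep⟩ q
    obtain ⟨c, hc, hne⟩ := hsep _ _ ((Nat.lt_succ_self _).trans (D.evenRow_lt_m q))
      (D.evenRow_lt_m q) (Nat.ne_of_lt (Nat.lt_succ_self _))
    rcases Finset.mem_union.1 hc with hc | hc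
    · rw [A_of_lt_ℓ _ _ (Finset.mem_range.1 hc), A_of_lt_ℓ _ _ (Finset.mem_range.1 hc),
        consistencyCode_oddRow, consistencyCode_evenRow] at hne
      exact absurd rfl hne
    · obtain ⟨i, -, rfl⟩ := Finset.mem_image.1 hc
      rw [D.A_evenRow_of_le q (D.le_bundleCol i (p i)), ne_eq, Bool.not_eq_false,
        A_oddRow_bundleCol] at hne
      exact ⟨i, hne⟩
  · intro hsat
    refine ⟨?_, (D.card_selectedColumns p).le, fun x y hx hy hxy => ?_⟩
    · intro c hc
      rcases Finset.mem_union.1 hc with hc | hc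
      · unfold n
        have := Finset.mem_range.1 hc
        omega
      · obtain ⟨i, -, rfl⟩ := Finset.mem_image.1 hc
        exact D.bundleCol_lt_n i (p i)
    · rcases Nat.lt_or_gt_of_ne hxy with h | h
      · exact D.separates_selectedColumns hsat h hy
      · obtain ⟨c, hc, hne⟩ := D.separates_selectedColumns hsat h hx
        exact ⟨c, hc, hne.symm⟩

lemma exists_forall_satisfiesClause_iff :
    (∃ p, ∀ q, D.SatisfiesClause p q) ↔
      ∃ α : Fin D.r → Bool, ∀ q : Fin D.s, ∃ lit ∈ D.Clause q, α lit.var = lit.pos := by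
  constructor
  · rintro ⟨p, hp⟩
    choose bundle hbundle hbundle_unique using D.hBpart
    refine ⟨fun v => D.asg (bundle v) (p (bundle v)) v, fun q => ?_⟩
    obtain ⟨i, lit, hlit, hv, hpos⟩ := hp q
    obtain rfl := hbundle_unique lit.var i hv
    exact ⟨lit, hlit, hpos⟩
  · rintro ⟨α, hα⟩
    choose p hp using fun i => D.hasg i α
    refine ⟨p, fun q => ?_⟩
    obtain ⟨lit, hlit, hpos⟩ := hα q
    obtain ⟨i, hi, -⟩ := D.hBpart lit.var
    exact ⟨i, lit, hlit, hi, (hp i lit.var hi).trans hpos⟩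

end DVInstance

/-- The constructed instance `(A, k)` has a solution if and only if
`φ` is satisfiable. -/
theorem solution_iff_satisfiable (D : DVInstance) :
    (∃ K : Finset ℕ, D.Solution K) ↔
      ∃ α : Fin D.r → Bool, ∀ q : Fin D.s, ∃ lit ∈ D.Clause q, α lit.var = lit.pos := by
  constructor
  · rintro ⟨K, hK⟩
    obtain ⟨p, rfl⟩ := D.exists_eq_selectedColumns_of_solution hK
    exact D.exists_forall_satisfiesClause_iff.1 ⟨p, (D.solution_selectedColumns_iff p).1 hK⟩
  · intro hsat
    obtain ⟨p, hp⟩ := D.exists_forall_satisfiesClause_iff.2 hsat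
    exact ⟨_, (D.solution_selectedColumns_iff p).2 hp⟩
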